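/- Let B be a width-3 ROBP whose first and last layers each have at most 2 vertices, which has at least one colliding layer, and which has no redundant vertices (every vertex is reachable from one of the two start vertices, and no two vertices in the same layer are locally equivalent). Let v_{1,1} and v_{1,2} be the two start vertices. Then there exists an input string on which the two computation paths starting from v_{1,1} and v_{1,2} collide, i.e., reach a common vertex at some layer. -/

import Mathlib

open Finset

/-- Uniform-distribution expectation of `f` over a finite type. -/
noncomputable def uexp {α : Type*} [Fintype α] (f : α → ℝ) : ℝ :=
  (∑ x : α, f x) / (Fintype.card α : ℝ)

/-- Variance under the uniform distribution. -/
noncomputable def uvar {α : Type*} [Fintype α] (f : α → ℝ) : ℝ :=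
  uexp (fun x => f x ^ 2) - (uexp f) ^ 2

open Classical in
/-- Real-valued indicator of a proposition. -/
noncomputable def ind (P : Prop) : ℝ := if P then 1 else 0

/-- `sel T x y` agrees with `x` on `T` and with `y` outside of `T`. -/
def sel {n : ℕ} (T : Finset (Fin n)) (x y : Fin n → Bool) : Fin n → Bool :=
  fun i => if i ∈ T then x i else y i

/-- The bias function of `f` with respect to the set `T` of live coordinates. -/
noncomputable def biasFn {n : ℕ} (T : Finset (Fin n)) (f : (Fin n → Bool) → ℝ) :
    (Fin n → Bool) → ℝ :=
  fun x => uexp (fun y : Fin n → Bool => f (sel T x y))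

/-- A layered read-once branching program of width `w` and length `n`.
`V i` is the set of vertices of layer `i`; the Boolean `true` corresponds to the
edge label `1` and `false` to the edge label `-1`; the program outputs `-1` iff it
accepts. -/
structure ROBP (w n : ℕ) where
  V : Fin (n + 1) → Finset (Fin w)
  V_nonempty : ∀ i, (V i).Nonempty
  start : Fin w
  start_mem : start ∈ V 0
  trans : Fin n → Bool → Fin w → Fin w
  trans_mem : ∀ (i : Fin n) (b : Bool) (v : Fin w), v ∈ V i.castSucc → trans i b v ∈ V i.succ
  accept : Fin w → Bool

namespace ROBP

variable {w n : ℕ}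

/-- The state reached at layer `j` when starting from state `v` at layer `i`. -/
def runTo (B : ROBP w n) (x : Fin n → Bool) (v : Fin w) (i j : ℕ) : Fin w :=
  if h : i < j ∧ i < n then runTo B x (B.trans ⟨i, h.2⟩ (x ⟨i, h.2⟩) v) (i + 1) j else v
termination_by j - i
decreasing_by omega

/-- The final state on input `x`, starting from the start vertex. -/
def run (B : ROBP w n) (x : Fin n → Bool) : Fin w := B.runTo x B.start 0 n

/-- The `±1` value computed by `B` on `x` (`-1` means accept). -/
noncomputable def eval (B : ROBP w n) (x : Fin n → Bool) : ℝ :=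
  if B.accept (B.run x) then -1 else 1

/-- Probability (over a uniformly random input) of reaching vertex `v` at layer `j`. -/
noncomputable def reachProb (B : ROBP w n) (j : ℕ) (v : Fin w) : ℝ :=
  uexp (fun x : Fin n → Bool => if B.runTo x B.start 0 j = v then (1 : ℝ) else 0)

/-- Acceptance probability starting from vertex `v` at layer `i`, on a uniform input. -/
noncomputable def beta (B : ROBP w n) (i : ℕ) (v : Fin w) : ℝ :=
  uexp (fun x : Fin n → Bool => if B.accept (B.runTo x v i n) then (1 : ℝ) else 0)

/-- Layer `i` of edges is colliding: two distinct vertices of layer `i` have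
equally-labeled edges entering the same vertex of layer `i+1`. -/
def Colliding (B : ROBP w n) (i : Fin n) : Prop :=
  ∃ (b : Bool) (u v : Fin w), u ∈ B.V i.castSucc ∧ v ∈ B.V i.castSucc ∧ u ≠ v ∧
    B.trans i b u = B.trans i b v

/-- The number of colliding layers of `B`. -/
noncomputable def collidingCount (B : ROBP w n) : ℕ :=
  Nat.card {i : Fin n // B.Colliding i}

/-- The value of `B` on `x` when all vertices of `V 0` are interpreted as start
vertices: the average of the `±1` outcomes of the corresponding computation paths. -/
noncomputable def avgEval (B : ROBP w n) (x : Fin n → Bool) : ℝ :=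
  (∑ v ∈ B.V 0, (if B.accept (B.runTo x v 0 n) then (-1 : ℝ) else 1)) / ((B.V 0).card : ℝ)

/-- The averaged value of the suffix of `B` starting at layer `t`, whose start-vertex
set is `V t`. -/
noncomputable def suffixEval (B : ROBP w n) (t : Fin (n + 1)) (x : Fin n → Bool) : ℝ :=
  (∑ v ∈ B.V t, (if B.accept (B.runTo x v (t : ℕ) n) then (-1 : ℝ) else 1)) /
    ((B.V t).card : ℝ)

/-- `B` is a `(w, ℓ, m)`-ROBP: it can be written as a concatenation of `m` consecutive
blocks, each block boundary layer having at most `2` vertices and each block having at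
most `ℓ` colliding layers. -/
def IsDecomp (B : ROBP w n) (ℓ m : ℕ) : Prop :=
  ∃ cut : Fin (m + 1) → Fin (n + 1),
    Monotone cut ∧ cut 0 = 0 ∧ cut (Fin.last m) = Fin.last n ∧
    (∀ j, (B.V (cut j)).card ≤ 2) ∧
    (∀ j : Fin m,
      Nat.card {i : Fin n //
        (cut j.castSucc : ℕ) ≤ (i : ℕ) ∧ (i : ℕ) < (cut j.succ : ℕ) ∧ B.Colliding i} ≤ ℓ)

end ROBP

/-- `G` is a pseudorandom generator that `ε`-fools the real-valued function `f`. -/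
def fools {r n : ℕ} (G : (Fin r → Bool) → (Fin n → Bool)) (f : (Fin n → Bool) → ℝ)
    (ε : ℝ) : Prop :=
  |uexp f - uexp (fun s => f (G s))| ≤ ε

/-- Expectation of `f` under the distribution with mass function `μ`. -/
noncomputable def dExp {α : Type*} [Fintype α] (μ f : α → ℝ) : ℝ :=
  ∑ x : α, μ x * f x

/-!
Suppose the two computation paths never meet. At a colliding layer two distinct vertices `u`, `v`
have equally labelled edges into a common vertex. Each of `u`, `v` is reached by one of the paths
on some input; the other path then sits at a third vertex, which cannot be `u` or `v` (the pair
`{u, v}` would merge one step later), so in width 3 it is the same vertex `z` for both. Thus the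
unordered pairs `{u, z}` and `{v, z}` are both occupied by the two paths. Since no two vertices
of a layer are locally equivalent, some label separates `u` from `v`, and following it keeps two
occupied pairs sharing a vertex all the way to the last layer, which therefore has three vertices.
-/

namespace ROBP

variable {w n : ℕ} (B : ROBP w n)

theorem runTo_of_lt (x : Fin n → Bool) (v : Fin w) {i j : ℕ} (hij : i < j) (hi : i < n) :
    B.runTo x v i j = B.runTo x (B.trans ⟨i, hi⟩ (x ⟨i, hi⟩) v) (i + 1) j := by
  rw [runTo, dif_pos ⟨hij, hi⟩]

theorem runTo_of_not_lt (x : Fin n → Bool) (v : Fin w) {i j : ℕ} (h : ¬ (i < j ∧ i < n)) :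
    B.runTo x v i j = v := by
  rw [runTo, dif_neg h]

theorem runTo_runTo (x : Fin n → Bool) (v : Fin w) {i j k : ℕ} (hij : i ≤ j) (hjk : j ≤ k) :
    B.runTo x (B.runTo x v i j) j k = B.runTo x v i k := by
  by_cases h : i < j ∧ i < n
  · rw [B.runTo_of_lt x v h.1 h.2, B.runTo_of_lt x v (by omega) h.2]
    exact runTo_runTo x _ h.1 hjk
  · rw [B.runTo_of_not_lt x v h]
    by_cases hij' : i < j
    · rw [B.runTo_of_not_lt x v (by omega), B.runTo_of_not_lt x v (by omega)]
    · rw [show j = i by omega]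
termination_by j - i

theorem runTo_congr {x y : Fin n → Bool} (v : Fin w) {i j : ℕ}
    (hxy : ∀ k : Fin n, i ≤ k → (k : ℕ) < j → x k = y k) :
    B.runTo x v i j = B.runTo y v i j := by
  by_cases h : i < j ∧ i < n
  · rw [B.runTo_of_lt x v h.1 h.2, B.runTo_of_lt y v h.1 h.2, hxy ⟨i, h.2⟩ le_rfl h.1]
    exact runTo_congr _ fun k hik hkj => hxy k (by omega) hkj
  · rw [B.runTo_of_not_lt x v h, B.runTo_of_not_lt y v h]
termination_by j - i

theorem runTo_mem (x : Fin n → Bool) {i j : ℕ} (hij : i ≤ j) (hj : j ≤ n) {v : Fin w}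
    (hv : v ∈ B.V ⟨i, by omega⟩) : B.runTo x v i j ∈ B.V ⟨j, by omega⟩ := by
  by_cases h : i < j
  · rw [B.runTo_of_lt x v h (by omega)]
    exact runTo_mem x h hj (B.trans_mem ⟨i, by omega⟩ _ v hv)
  · obtain rfl : j = i := by omega
    rwa [B.runTo_of_not_lt x v (by omega)]
termination_by j - i

theorem runTo_update_succ (x : Fin n → Bool) (v : Fin w) (t : Fin n) (c : Bool) :
    B.runTo (Function.update x t c) v 0 (t + 1) = B.trans t c (B.runTo x v 0 t) := by
  rw [← B.runTo_runTo _ v (Nat.zero_le t) (Nat.le_succ t), B.runTo_of_lt _ _ (by omega) t.isLt,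
    B.runTo_of_not_lt _ _ (by omega), Function.update_self]
  congr 1
  exact B.runTo_congr v fun k _ hk => Function.update_of_ne (Fin.ne_of_lt hk) c x

def IsReachablePair (v₁ v₂ : Fin w) (t : ℕ) (p : Sym2 (Fin w)) : Prop :=
  ∃ x : Fin n → Bool, s(B.runTo x v₁ 0 t, B.runTo x v₂ 0 t) = p

def HasForkAt (v₁ v₂ : Fin w) (t : ℕ) : Prop :=
  ∃ a b z, a ≠ b ∧ B.IsReachablePair v₁ v₂ t s(a, z) ∧ B.IsReachablePair v₁ v₂ t s(b, z)

variable {B} {v₁ v₂ : Fin w} {t : ℕ}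

theorem exists_isReachablePair (hV₀ : B.V 0 = {v₁, v₂}) {x : Fin n → Bool} {u : Fin w}
    (hu : u ∈ B.V 0) : ∃ q, B.IsReachablePair v₁ v₂ t s(B.runTo x u 0 t, q) := by
  have hmem : B.runTo x u 0 t ∈ s(B.runTo x v₁ 0 t, B.runTo x v₂ 0 t) := by
    rw [hV₀, Finset.mem_insert, Finset.mem_singleton] at hu
    rcases hu with rfl | rfl <;> simp
  obtain ⟨q, hq⟩ := Sym2.mem_iff_exists.1 hmem
  exact ⟨q, x, hq⟩

namespace IsReachablePair

variable {a b : Fin w}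

theorem map_trans {p : Sym2 (Fin w)} {i : Fin n} (h : B.IsReachablePair v₁ v₂ i p) (c : Bool) :
    B.IsReachablePair v₁ v₂ (i + 1) (p.map (B.trans i c)) := by
  obtain ⟨x, rfl⟩ := h
  exact ⟨Function.update x i c, by simp only [runTo_update_succ, Sym2.map_mk]⟩

theorem ne (hdisj : ∀ x, B.runTo x v₁ 0 t ≠ B.runTo x v₂ 0 t)
    (h : B.IsReachablePair v₁ v₂ t s(a, b)) : a ≠ b := by
  obtain ⟨x, hx⟩ := h
  rintro rfl
  have hdiag : s(a, a).IsDiag := Sym2.mk_isDiag_iff.2 rfl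
  rw [← hx, Sym2.mk_isDiag_iff] at hdiag
  exact hdisj x hdiag

theorem left_mem (hv₁ : v₁ ∈ B.V 0) (hv₂ : v₂ ∈ B.V 0) (ht : t ≤ n)
    (h : B.IsReachablePair v₁ v₂ t s(a, b)) : a ∈ B.V ⟨t, by omega⟩ := by
  obtain ⟨x, hx⟩ := h
  have ha : a ∈ s(B.runTo x v₁ 0 t, B.runTo x v₂ 0 t) := hx ▸ Sym2.mem_mk_left a b
  rcases Sym2.mem_iff.1 ha with rfl | rfl
  exacts [B.runTo_mem x t.zero_le ht hv₁, B.runTo_mem x t.zero_le ht hv₂]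

theorem trans_ne {i : Fin n} (hdisj : ∀ x, B.runTo x v₁ 0 (i + 1) ≠ B.runTo x v₂ 0 (i + 1))
    (h : B.IsReachablePair v₁ v₂ i s(a, b)) (c : Bool) : B.trans i c a ≠ B.trans i c b :=
  (h.map_trans c).ne hdisj

end IsReachablePair

theorem hasForkAt_of_colliding {B : ROBP 3 n} {v₁ v₂ : Fin 3} (hV₀ : B.V 0 = {v₁, v₂})
    (hreach : ∀ i : Fin (n + 1), ∀ v ∈ B.V i,
      ∃ (x : Fin n → Bool) (u : Fin 3), u ∈ B.V 0 ∧ B.runTo x u 0 (i : ℕ) = v)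
    (hdisj : ∀ x t, t ≤ n → B.runTo x v₁ 0 t ≠ B.runTo x v₂ 0 t) {i : Fin n}
    (hi : B.Colliding i) : B.HasForkAt v₁ v₂ i := by
  obtain ⟨c, u, v, hu, hv, huv, htrans⟩ := hi
  have partner : ∀ y ∈ B.V i.castSucc, ∃ q, B.IsReachablePair v₁ v₂ i s(y, q) := by
    intro y hy
    obtain ⟨x, u₀, hu₀, rfl⟩ := hreach _ y hy
    exact exists_isReachablePair hV₀ hu₀
  obtain ⟨q, hq⟩ := partner u hu
  obtain ⟨q', hq'⟩ := partner v hv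
  have hq_u := (hq.ne (hdisj · i i.isLt.le)).symm
  have hq'_v := (hq'.ne (hdisj · i i.isLt.le)).symm
  have hq_v : q ≠ v := by
    rintro rfl
    exact hq.trans_ne (hdisj · _ i.isLt) c htrans
  have hq'_u : q' ≠ u := by
    rintro rfl
    exact hq'.trans_ne (hdisj · _ i.isLt) c htrans.symm
  obtain rfl : q = q' := by omega
  exact ⟨u, v, q, huv, hq, hq'⟩

theorem HasForkAt.succ {i : Fin n}
    (hlocal : ∀ u ∈ B.V i.castSucc, ∀ v ∈ B.V i.castSucc, u ≠ v →
      ¬ (B.trans i true u = B.trans i true v ∧ B.trans i false u = B.trans i false v))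
    (hv₁ : v₁ ∈ B.V 0) (hv₂ : v₂ ∈ B.V 0) (h : B.HasForkAt v₁ v₂ i) :
    B.HasForkAt v₁ v₂ (i + 1) := by
  obtain ⟨a, b, z, hab, ha, hb⟩ := h
  have hsep : ∃ c, B.trans i c a ≠ B.trans i c b := by
    by_contra! hsame
    exact hlocal a (ha.left_mem hv₁ hv₂ i.isLt.le) b (hb.left_mem hv₁ hv₂ i.isLt.le) hab
      ⟨hsame true, hsame false⟩
  obtain ⟨c, hc⟩ := hsep
  exact ⟨_, _, _, hc, ha.map_trans c, hb.map_trans c⟩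

theorem HasForkAt.of_le
    (hlocal : ∀ i : Fin n, ∀ u ∈ B.V i.castSucc, ∀ v ∈ B.V i.castSucc, u ≠ v →
      ¬ (B.trans i true u = B.trans i true v ∧ B.trans i false u = B.trans i false v))
    (hv₁ : v₁ ∈ B.V 0) (hv₂ : v₂ ∈ B.V 0) {s : ℕ} (h : B.HasForkAt v₁ v₂ s) (hst : s ≤ t)
    (ht : t ≤ n) : B.HasForkAt v₁ v₂ t := by
  induction t, hst using Nat.le_induction with
  | base => exact h
  | succ t _ ih => exact HasForkAt.succ (i := ⟨t, by omega⟩) (hlocal _) hv₁ hv₂ (ih (by omega))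

theorem HasForkAt.two_lt_card (hv₁ : v₁ ∈ B.V 0) (hv₂ : v₂ ∈ B.V 0) (ht : t ≤ n)
    (hdisj : ∀ x, B.runTo x v₁ 0 t ≠ B.runTo x v₂ 0 t) (h : B.HasForkAt v₁ v₂ t) :
    2 < (B.V ⟨t, by omega⟩).card := by
  obtain ⟨a, b, z, hab, ha, hb⟩ := h
  exact Finset.two_lt_card.2 ⟨a, ha.left_mem hv₁ hv₂ ht, b, hb.left_mem hv₁ hv₂ ht,
    z, (Sym2.eq_swap ▸ ha).left_mem hv₁ hv₂ ht, hab, ha.ne hdisj, hb.ne hdisj⟩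

end ROBP

theorem collision_exists_general
    (n : ℕ) (B : ROBP 3 n) (v1 v2 : Fin 3)
    (hV0 : B.V 0 = {v1, v2})
    (hVlast : (B.V (Fin.last n)).card ≤ 2)
    (hcol : ∃ i : Fin n, B.Colliding i)
    (hreach : ∀ i : Fin (n + 1), ∀ v ∈ B.V i,
      ∃ (x : Fin n → Bool) (u : Fin 3), u ∈ B.V 0 ∧ B.runTo x u 0 (i : ℕ) = v)
    (hnoneq : ∀ i : Fin n, ∀ u ∈ B.V i.castSucc, ∀ v ∈ B.V i.castSucc, u ≠ v →
      ¬ (B.trans i true u = B.trans i true v ∧ B.trans i false u = B.trans i false v)) :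
    ∃ (x : Fin n → Bool) (t : ℕ), t ≤ n ∧ B.runTo x v1 0 t = B.runTo x v2 0 t := by
  by_contra! hdisj
  have hv1 : v1 ∈ B.V 0 := by simp [hV0]
  have hv2 : v2 ∈ B.V 0 := by simp [hV0]
  obtain ⟨i, hi⟩ := hcol
  have hfork : B.HasForkAt v1 v2 n :=
    (ROBP.hasForkAt_of_colliding hV0 hreach hdisj hi).of_le hnoneq hv1 hv2 i.isLt.le le_rfl
  exact hVlast.not_gt (hfork.two_lt_card hv1 hv2 le_rfl (hdisj · n le_rfl))

/-- A width-3 ROBP with at most `2` vertices on its first and last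
layers, at least one colliding layer and no redundant vertices (every vertex is
reachable from one of the two start vertices, and no two distinct vertices of a layer
are locally equivalent) admits an input on which the two computation paths starting
from the two start vertices collide. -/
theorem collision_exists
    (n : ℕ) (B : ROBP 3 n) (v1 v2 : Fin 3) (hne : v1 ≠ v2)
    (hV0 : B.V 0 = {v1, v2})
    (hVlast : (B.V (Fin.last n)).card ≤ 2)
    (hcol : ∃ i : Fin n, B.Colliding i)
    (hreach : ∀ i : Fin (n + 1), ∀ v ∈ B.V i,
      ∃ (x : Fin n → Bool) (u : Fin 3), u ∈ B.V 0 ∧ B.runTo x u 0 (i : ℕ) = v)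
    (hnoneq : ∀ i : Fin n, ∀ u ∈ B.V i.castSucc, ∀ v ∈ B.V i.castSucc, u ≠ v →
      ¬ (B.trans i true u = B.trans i true v ∧ B.trans i false u = B.trans i false v)) :
    ∃ (x : Fin n → Bool) (t : ℕ), t ≤ n ∧ B.runTo x v1 0 t = B.runTo x v2 0 t :=
  collision_exists_general n B v1 v2 hV0 hVlast hcol hreach hnoneq
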